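/- For every α ∈ [0,∞], the level set {x ∈ (0,1) : λ(x) = α} is dense in (0,1). -/

import Mathlib

open Filter MeasureTheory Set
open scoped ENNReal NNReal

/-- The Engel series map `T(x) = x⌈1/x⌉ - 1`, with `T(0) = 0`. -/
noncomputable def engelT (x : ℝ) : ℝ := if x = 0 then 0 else x * (⌈x⁻¹⌉ : ℝ) - 1

/-- The `n`-th Engel digit `d_n(x) = ⌈1/(T^{n-1} x)⌉` (for `n ≥ 1`);
it equals `0` when the Engel expansion of `x` has terminated. -/
noncomputable def engelDigit (n : ℕ) (x : ℝ) : ℕ := ⌈(engelT^[n - 1] x)⁻¹⌉₊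

/-- The exponent of convergence `λ(x) = inf {s ≥ 0 : Σ_{n≥1} d_n(x)^{-s} < ∞}`,
 valued in `[0,∞]` (with `inf ∅ = ∞`). -/
noncomputable def engelLambda (x : ℝ) : ℝ≥0∞ :=
  sInf (ENNReal.ofReal ''
    {s : ℝ | 0 ≤ s ∧ Summable fun n : ℕ => ((engelDigit (n + 1) x : ℝ)) ^ (-s)})

/-- `D(x) = liminf_n (log d_n(x))/(log n)`, valued in `[0,∞]`. -/
noncomputable def engelDexp (x : ℝ) : ℝ≥0∞ :=
  Filter.liminf (fun n : ℕ =>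
    ENNReal.ofReal (Real.log (engelDigit n x) / Real.log n)) Filter.atTop

/-! A monotone sequence of digits `d` with `2 ≤ d 0` and `d → ∞` is the Engel digit sequence
of `x = ∑ₖ ∏_{j ≤ k} 1 / d j`, and points whose first `n` Engel digits agree are `2⁻ⁿ`-close,
since the Engel map multiplies differences by the current digit. Near an irrational `y` we
therefore keep its first `n` digits `c` and continue with `c n + ⌈a k⌉`, where `a` has exponent
of convergence `α`: `2 ^ k` for `α = 0`, `(k + 1) ^ (1 / α)` for `0 < α < ∞` and
`1 + log (k + 1)` for `α = ∞`. The exponent of convergence ignores finitely many terms and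
bounded factors, so `λ(x) = α`; and irrationals are dense. -/

noncomputable def convergenceExponent (a : ℕ → ℝ) : ℝ≥0∞ :=
  sInf (ENNReal.ofReal '' {s : ℝ | 0 ≤ s ∧ Summable fun n => a n ^ (-s)})

theorem engelLambda_eq_convergenceExponent (x : ℝ) :
    engelLambda x = convergenceExponent fun n => (engelDigit (n + 1) x : ℝ) :=
  rfl

section ConvergenceExponent

variable {a b : ℕ → ℝ}

theorem convergenceExponent_le_ofReal {s : ℝ} (hs : 0 ≤ s) (h : Summable fun n => a n ^ (-s)) :
    convergenceExponent a ≤ ENNReal.ofReal s :=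
  sInf_le ⟨s, ⟨hs, h⟩, rfl⟩

theorem ofReal_le_convergenceExponent {t : ℝ}
    (h : ∀ s, 0 ≤ s → (Summable fun n => a n ^ (-s)) → t ≤ s) :
    ENNReal.ofReal t ≤ convergenceExponent a :=
  le_sInf <| by
    rintro _ ⟨s, ⟨hs, hsum⟩, rfl⟩
    exact ENNReal.ofReal_le_ofReal (h s hs hsum)

theorem convergenceExponent_eq_ofReal {t : ℝ} (ht : 0 ≤ t)
    (hlow : ∀ s, 0 ≤ s → (Summable fun n => a n ^ (-s)) → t ≤ s)
    (hup : ∀ s, t < s → Summable fun n => a n ^ (-s)) :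
    convergenceExponent a = ENNReal.ofReal t := by
  refine le_antisymm (ENNReal.le_of_forall_pos_le_add fun ε hε _ => ?_)
    (ofReal_le_convergenceExponent hlow)
  have := convergenceExponent_le_ofReal (by positivity) (hup (t + ε) (by simpa using hε))
  rwa [ENNReal.ofReal_add ht ε.coe_nonneg, ENNReal.ofReal_coe_nnreal] at this

theorem convergenceExponent_le_of_le_mul {C : ℝ} (hC : 0 < C) (ha : ∀ n, 0 < a n)
    (hab : ∀ n, a n ≤ C * b n) : convergenceExponent b ≤ convergenceExponent a := by
  refine sInf_le_sInf (image_mono fun s ⟨hs, hsum⟩ => ⟨hs, ?_⟩)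
  have hb : ∀ n, 0 < b n := fun n => pos_of_mul_pos_right ((ha n).trans_le (hab n)) hC.le
  refine (hsum.mul_left (C ^ s)).of_nonneg_of_le (fun n => (Real.rpow_pos_of_pos (hb n) _).le)
    fun n => ?_
  calc b n ^ (-s) = C ^ s * (C * b n) ^ (-s) := by
        rw [Real.mul_rpow hC.le (hb n).le, Real.rpow_neg hC.le, mul_inv_cancel_left₀
          (Real.rpow_pos_of_pos hC s).ne']
    _ ≤ C ^ s * a n ^ (-s) := mul_le_mul_of_nonneg_left
        (Real.rpow_le_rpow_of_nonpos (ha n) (hab n) (neg_nonpos.2 hs)) (by positivity)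

theorem convergenceExponent_comp_add (a : ℕ → ℝ) (m : ℕ) :
    convergenceExponent (fun n => a (n + m)) = convergenceExponent a := by
  unfold convergenceExponent
  congr 3
  ext s
  exact and_congr_right fun _ => summable_nat_add_iff (f := fun n => a n ^ (-s)) m

theorem convergenceExponent_natCast_add_natCeil (m : ℕ) (ha : ∀ k, 1 ≤ a k) :
    convergenceExponent (fun k => ((m + ⌈a k⌉₊ : ℕ) : ℝ)) = convergenceExponent a := by
  have hceil : ∀ k, a k ≤ ⌈a k⌉₊ := fun k => Nat.le_ceil _
  have hpos : ∀ k, 0 < a k := fun k => one_pos.trans_le (ha k)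
  have hmpos : ∀ k, (0 : ℝ) < ((m + ⌈a k⌉₊ : ℕ) : ℝ) := fun k => by
    push_cast
    linarith [hpos k, hceil k, (m.cast_nonneg : (0 : ℝ) ≤ m)]
  refine le_antisymm (convergenceExponent_le_of_le_mul one_pos hpos fun k => ?_)
    (convergenceExponent_le_of_le_mul (C := m + 2) (by positivity) hmpos fun k => ?_)
  · push_cast
    linarith [hceil k, (m.cast_nonneg : (0 : ℝ) ≤ m)]
  · have := Nat.ceil_lt_add_one (hpos k).le
    push_cast
    nlinarith [ha k, (m.cast_nonneg : (0 : ℝ) ≤ m)]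

end ConvergenceExponent

theorem summable_natCast_add_one_rpow {p : ℝ} :
    (Summable fun n : ℕ => ((n : ℝ) + 1) ^ p) ↔ p < -1 := by
  simpa using (summable_nat_add_iff 1).trans (Real.summable_nat_rpow (p := p))

theorem convergenceExponent_two_pow : convergenceExponent (fun n => (2 : ℝ) ^ n) = 0 := by
  rw [← ENNReal.ofReal_zero]
  refine convergenceExponent_eq_ofReal le_rfl (fun s hs _ => hs) fun s hs => ?_
  have hgeom : (2 : ℝ) ^ (-s) < 1 := Real.rpow_lt_one_of_one_lt_of_neg one_lt_two (by linarith)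
  refine (summable_geometric_of_lt_one (by positivity) hgeom).congr fun n => ?_
  rw [← Real.rpow_natCast, ← Real.rpow_natCast, ← Real.rpow_mul zero_le_two,
    ← Real.rpow_mul zero_le_two, mul_comm]

theorem convergenceExponent_rpow_inv {t : ℝ} (ht : 0 < t) :
    convergenceExponent (fun n => ((n : ℝ) + 1) ^ t⁻¹) = ENNReal.ofReal t := by
  have key : ∀ s, (Summable fun n : ℕ => (((n : ℝ) + 1) ^ t⁻¹) ^ (-s)) ↔ t < s := fun s => by
    have hmul : ∀ n : ℕ, (((n : ℝ) + 1) ^ t⁻¹) ^ (-s) = ((n : ℝ) + 1) ^ (t⁻¹ * -s) :=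
      fun n => (Real.rpow_mul (by positivity) _ _).symm
    simp_rw [hmul]
    rw [summable_natCast_add_one_rpow, inv_mul_eq_div, div_lt_iff₀ ht]
    constructor <;> intro h <;> linarith
  exact convergenceExponent_eq_ofReal ht.le (fun s _ hs => ((key s).1 hs).le) fun s => (key s).2

theorem convergenceExponent_one_add_log :
    convergenceExponent (fun n => 1 + Real.log ((n : ℝ) + 1)) = ⊤ := by
  refine ENNReal.eq_top_of_forall_nnreal_le fun r => ?_
  rcases eq_zero_or_pos r with rfl | hr
  · simp
  replace hr : (0 : ℝ) < r := hr
  have hn : ∀ n : ℕ, (1 : ℝ) ≤ (n : ℝ) + 1 := fun n => by simp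
  rw [← ENNReal.ofReal_coe_nnreal, ← convergenceExponent_rpow_inv hr]
  refine convergenceExponent_le_of_le_mul (C := 1 + r) (by positivity)
    (fun n => add_pos_of_pos_of_nonneg one_pos (Real.log_nonneg (hn n))) fun n => ?_
  have hlog := Real.log_le_rpow_div (by positivity : (0 : ℝ) ≤ n + 1) (inv_pos.2 hr)
  have hone := Real.one_le_rpow (hn n) (inv_pos.2 hr).le
  rw [div_inv_eq_mul] at hlog
  nlinarith

theorem exists_tail_convergenceExponent_eq (α : ℝ≥0∞) :
    ∃ a : ℕ → ℝ, (∀ n, 1 ≤ a n) ∧ Monotone a ∧ Tendsto a atTop atTop ∧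
      convergenceExponent a = α := by
  have hlin : Tendsto (fun n : ℕ => (n : ℝ) + 1) atTop atTop :=
    tendsto_atTop_add_const_right _ _ tendsto_natCast_atTop_atTop
  have hone : ∀ n : ℕ, (1 : ℝ) ≤ n + 1 := fun n => by simp
  induction α using ENNReal.recTopCoe with
  | top =>
    refine ⟨fun n => 1 + Real.log ((n : ℝ) + 1), fun n => ?_, fun m n h => ?_,
      tendsto_atTop_add_const_left _ 1 (Real.tendsto_log_atTop.comp hlin),
      convergenceExponent_one_add_log⟩
    · simpa using Real.log_nonneg (hone n)
    · simp only [add_le_add_iff_left]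
      exact Real.log_le_log (by positivity) (by gcongr)
  | coe r =>
    rcases eq_zero_or_pos r with rfl | hr
    · refine ⟨fun n => 2 ^ n, fun n => one_le_pow₀ one_le_two, pow_right_mono₀ one_le_two,
        tendsto_pow_atTop_atTop_of_one_lt one_lt_two, ?_⟩
      simpa using convergenceExponent_two_pow
    · refine ⟨fun n => ((n : ℝ) + 1) ^ (r : ℝ)⁻¹,
        fun n => Real.one_le_rpow (hone n) (by positivity),
        fun m n h => Real.rpow_le_rpow (by positivity) (by gcongr) (by positivity),
        (tendsto_rpow_atTop (by positivity)).comp hlin, ?_⟩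
      exact (convergenceExponent_rpow_inv hr).trans ENNReal.ofReal_coe_nnreal


section EngelMap

variable {z : ℝ}

theorem engelT_of_pos (hz : 0 < z) : engelT z = z * ⌈z⁻¹⌉₊ - 1 := by
  rw [engelT, if_neg hz.ne', natCast_ceil_eq_intCast_ceil (inv_pos.2 hz).le]

theorem engelT_nonneg (hz : 0 < z) : 0 ≤ engelT z := by
  rw [engelT_of_pos hz, sub_nonneg, ← mul_inv_cancel₀ hz.ne']
  exact mul_le_mul_of_nonneg_left (Nat.le_ceil _) hz.le

theorem engelT_lt_self (hz : 0 < z) : engelT z < z := by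
  have := mul_lt_mul_of_pos_left (Nat.ceil_lt_add_one (inv_pos.2 hz).le) hz
  rw [mul_add, mul_inv_cancel₀ hz.ne'] at this
  rw [engelT_of_pos hz]
  linarith

theorem inv_natCeil_mul_one_add_engelT (hz : 0 < z) : (⌈z⁻¹⌉₊ : ℝ)⁻¹ * (1 + engelT z) = z := by
  have hc : (⌈z⁻¹⌉₊ : ℝ) ≠ 0 := (Nat.cast_pos.2 (Nat.ceil_pos.2 (inv_pos.2 hz))).ne'
  rw [engelT_of_pos hz]
  field_simp
  ring

theorem two_le_natCeil_inv (hz0 : 0 < z) (hz1 : z < 1) : 2 ≤ ⌈z⁻¹⌉₊ :=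
  Nat.lt_ceil.2 (by exact_mod_cast (one_lt_inv₀ hz0).2 hz1)

theorem irrational_engelT (hz : Irrational z) (hz0 : 0 < z) : Irrational (engelT z) := by
  rw [engelT_of_pos hz0]
  exact_mod_cast (hz.mul_natCast (Nat.ceil_pos.2 (inv_pos.2 hz0)).ne').sub_natCast 1

theorem engelT_pos_of_irrational (hz : Irrational z) (hz0 : 0 < z) : 0 < engelT z :=
  (engelT_nonneg hz0).lt_of_ne (irrational_engelT hz hz0).ne_zero.symm

theorem engelT_iterate_pos_of_irrational (hz : Irrational z) (hz0 : 0 < z) (k : ℕ) :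
    0 < engelT^[k] z := by
  suffices Irrational (engelT^[k] z) ∧ 0 < engelT^[k] z from this.2
  induction k with
  | zero => exact ⟨hz, hz0⟩
  | succ k ih =>
    rw [Function.iterate_succ_apply']
    exact ⟨irrational_engelT ih.1 ih.2, engelT_pos_of_irrational ih.1 ih.2⟩

end EngelMap

theorem engelDigit_succ (k : ℕ) (x : ℝ) : engelDigit (k + 1) x = ⌈(engelT^[k] x)⁻¹⌉₊ := rfl

section EngelOrbit

variable {x : ℝ} (hpos : ∀ k, 0 < engelT^[k] x)
include hpos

theorem engelDigit_succ_mono : Monotone fun k => engelDigit (k + 1) x := by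
  refine monotone_nat_of_le_succ fun k => ?_
  simp only [engelDigit_succ]
  refine Nat.ceil_mono (inv_anti₀ (hpos (k + 1)) ?_)
  rw [Function.iterate_succ_apply']
  exact (engelT_lt_self (hpos k)).le

theorem engelT_iterate_lt_one (hx : x < 1) (k : ℕ) : engelT^[k] x < 1 := by
  induction k with
  | zero => exact hx
  | succ k ih =>
    rw [Function.iterate_succ_apply']
    exact (engelT_lt_self (hpos k)).trans ih

theorem two_le_engelDigit_succ (hx : x < 1) (k : ℕ) : 2 ≤ engelDigit (k + 1) x :=
  two_le_natCeil_inv (hpos k) (engelT_iterate_lt_one hpos hx k)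

end EngelOrbit

theorem abs_sub_lt_of_engelDigit_eq {x y : ℝ} (hx : x < 1) (hy : y < 1)
    (hxpos : ∀ k, 0 < engelT^[k] x) (hypos : ∀ k, 0 < engelT^[k] y) {n : ℕ}
    (h : ∀ k < n, engelDigit (k + 1) x = engelDigit (k + 1) y) : |x - y| < (1 / 2) ^ n := by
  induction n generalizing x y with
  | zero =>
    have hx0 : 0 < x := hxpos 0
    have hy0 : 0 < y := hypos 0
    rw [pow_zero, abs_sub_lt_iff]
    constructor <;> linarith
  | succ n ih =>
    have hshift : ∀ {w : ℝ} (k : ℕ), engelT^[k] (engelT w) = engelT^[k + 1] w :=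
      fun k => (Function.iterate_succ_apply _ _ _).symm
    have hT : |engelT x - engelT y| < (1 / 2) ^ n :=
      ih ((engelT_lt_self (hxpos 0)).trans hx) ((engelT_lt_self (hypos 0)).trans hy)
        (fun k => hshift k ▸ hxpos (k + 1)) (fun k => hshift k ▸ hypos (k + 1))
        fun k hk => by simpa only [engelDigit_succ, hshift] using h (k + 1) (by omega)
    have hc : 2 ≤ ⌈x⁻¹⌉₊ := two_le_engelDigit_succ hxpos hx 0
    have hxy : ⌈x⁻¹⌉₊ = ⌈y⁻¹⌉₊ := h 0 n.succ_pos
    have hx0 : 0 < x := hxpos 0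
    have hy0 : 0 < y := hypos 0
    have hdiff : x - y = (⌈x⁻¹⌉₊ : ℝ)⁻¹ * (engelT x - engelT y) := by
      conv_lhs => rw [← inv_natCeil_mul_one_add_engelT hx0,
        ← inv_natCeil_mul_one_add_engelT hy0, ← hxy]
      ring
    calc |x - y| = (⌈x⁻¹⌉₊ : ℝ)⁻¹ * |engelT x - engelT y| := by
          rw [hdiff, abs_mul, abs_of_nonneg (by positivity)]
      _ ≤ 2⁻¹ * |engelT x - engelT y| := by
          gcongr
          exact_mod_cast hc
      _ < 2⁻¹ * (1 / 2) ^ n := by gcongr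
      _ = (1 / 2) ^ (n + 1) := by ring

noncomputable def engelSum (d : ℕ → ℕ) (n : ℕ) : ℝ :=
  ∑' k, ∏ j ∈ Finset.range (k + 1), ((d (n + j) : ℝ))⁻¹

section EngelSum

variable {d : ℕ → ℕ} (hd : Monotone d) (hd2 : 2 ≤ d 0)
include hd hd2

theorem two_le_cast_of_monotone (n : ℕ) : (2 : ℝ) ≤ d n := by
  exact_mod_cast hd2.trans (hd n.zero_le)

theorem prod_inv_le_inv_pow (n m : ℕ) :
    ∏ j ∈ Finset.range m, ((d (n + j) : ℝ))⁻¹ ≤ ((d n : ℝ))⁻¹ ^ m := by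
  have hpos : ∀ j, (0 : ℝ) < d j := fun j => two_pos.trans_le (two_le_cast_of_monotone hd hd2 j)
  calc ∏ j ∈ Finset.range m, ((d (n + j) : ℝ))⁻¹ ≤ ∏ _j ∈ Finset.range m, ((d n : ℝ))⁻¹ :=
        Finset.prod_le_prod (fun _ _ => (inv_pos.2 (hpos _)).le) fun j _ =>
          inv_anti₀ (hpos n) (by exact_mod_cast hd (n.le_add_right j))
    _ = ((d n : ℝ))⁻¹ ^ m := by simp

theorem summable_engelSum (n : ℕ) :
    Summable fun k => ∏ j ∈ Finset.range (k + 1), ((d (n + j) : ℝ))⁻¹ := by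
  have hr : ((d n : ℝ))⁻¹ < 1 :=
    inv_lt_one_of_one_lt₀ (by linarith [two_le_cast_of_monotone hd hd2 n])
  refine Summable.of_nonneg_of_le (fun _ => by positivity)
    (fun k => prod_inv_le_inv_pow hd hd2 n _) ?_
  exact (summable_geometric_of_lt_one (by positivity) hr).comp_injective (add_left_injective 1)

theorem engelSum_pos (n : ℕ) : 0 < engelSum d n :=
  have hterm : ∀ k, 0 < ∏ j ∈ Finset.range (k + 1), ((d (n + j) : ℝ))⁻¹ := fun _ =>
    Finset.prod_pos fun _ _ => inv_pos.2 (two_pos.trans_le (two_le_cast_of_monotone hd hd2 _))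
  (summable_engelSum hd hd2 n).tsum_pos (fun k => (hterm k).le) 0 (hterm 0)

theorem engelSum_eq (n : ℕ) : engelSum d n = ((d n : ℝ))⁻¹ * (1 + engelSum d (n + 1)) := by
  rw [engelSum, (summable_engelSum hd hd2 n).tsum_eq_zero_add, engelSum, mul_add, mul_one,
    ← tsum_mul_left]
  refine congrArg₂ (· + ·) (by simp) (tsum_congr fun k => ?_)
  rw [Finset.prod_range_succ', add_zero, mul_comm]
  simp only [add_assoc, add_comm 1]

theorem inv_lt_engelSum (n : ℕ) : ((d n : ℝ))⁻¹ < engelSum d n := by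
  have hD := two_le_cast_of_monotone hd hd2 n
  rw [engelSum_eq hd hd2 n]
  exact lt_mul_of_one_lt_right (by positivity) (by linarith [engelSum_pos hd hd2 (n + 1)])

variable (hdt : Tendsto d atTop atTop)
include hdt

theorem engelSum_lt (n : ℕ) : engelSum d n < ((d n : ℝ) - 1)⁻¹ := by
  obtain ⟨N, hN⟩ := (hdt.eventually_gt_atTop (d n)).exists_forall_of_atTop
  have hD := two_le_cast_of_monotone hd hd2 n
  set r : ℝ := ((d n : ℝ))⁻¹
  have hr0 : 0 ≤ r := by positivity
  have hr1 : r < 1 := inv_lt_one_of_one_lt₀ (by linarith)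
  have hgeom : HasSum (fun k => r ^ (k + 1)) ((d n : ℝ) - 1)⁻¹ := by
    have hsum : r * (1 - r)⁻¹ = ((d n : ℝ) - 1)⁻¹ := by
      simp only [r]
      field_simp
    simpa only [pow_succ', hsum] using (hasSum_geometric_of_lt_one hr0 hr1).mul_left r
  have hstrict : ∏ j ∈ Finset.range (N + 1), ((d (n + j) : ℝ))⁻¹ < r ^ (N + 1) := by
    rw [Finset.prod_range_succ, pow_succ]
    refine mul_lt_mul' (prod_inv_le_inv_pow hd hd2 n N)
      (inv_strictAnti₀ (by linarith) (by exact_mod_cast hN (n + N) (N.le_add_left n)))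
      (by positivity) (by positivity)
  rw [← hgeom.tsum_eq]
  exact Summable.tsum_lt_tsum_of_nonneg (fun _ => by positivity)
    (fun k => prod_inv_le_inv_pow hd hd2 n _) hstrict hgeom.summable

theorem natCeil_inv_engelSum (n : ℕ) : ⌈(engelSum d n)⁻¹⌉₊ = d n := by
  have hD := two_le_cast_of_monotone hd hd2 n
  have hx := engelSum_pos hd hd2 n
  rw [Nat.ceil_eq_iff (by exact_mod_cast (two_pos.trans_le hD).ne'),
    Nat.cast_sub (by exact_mod_cast one_le_two.trans hD), Nat.cast_one]
  constructor
  · exact (lt_inv_comm₀ hx (by linarith)).1 (engelSum_lt hd hd2 hdt n)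
  · exact (inv_lt_of_inv_lt₀ (by linarith) (inv_lt_engelSum hd hd2 n)).le

theorem engelT_engelSum (n : ℕ) : engelT (engelSum d n) = engelSum d (n + 1) := by
  have hD := two_le_cast_of_monotone hd hd2 n
  rw [engelT_of_pos (engelSum_pos hd hd2 n), natCeil_inv_engelSum hd hd2 hdt,
    engelSum_eq hd hd2 n]
  field_simp
  ring

theorem engelT_iterate_engelSum (k : ℕ) : engelT^[k] (engelSum d 0) = engelSum d k := by
  induction k with
  | zero => rfl
  | succ k ih => rw [Function.iterate_succ_apply', ih, engelT_engelSum hd hd2 hdt]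

end EngelSum

theorem exists_engelDigit_eq {d : ℕ → ℕ} (hd : Monotone d) (hd2 : 2 ≤ d 0)
    (hdt : Tendsto d atTop atTop) :
    ∃ x < 1, (∀ k, 0 < engelT^[k] x) ∧ ∀ k, engelDigit (k + 1) x = d k := by
  refine ⟨engelSum d 0, (engelSum_lt hd hd2 hdt 0).trans_le (inv_le_one_of_one_le₀ ?_),
    fun k => ?_, fun k => ?_⟩
  · linarith [two_le_cast_of_monotone hd hd2 0]
  · rw [engelT_iterate_engelSum hd hd2 hdt]
    exact engelSum_pos hd hd2 k
  · rw [engelDigit_succ, engelT_iterate_engelSum hd hd2 hdt, natCeil_inv_engelSum hd hd2 hdt]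

theorem exists_engelDigit_prefix_engelLambda_eq {y : ℝ} (hy : y < 1)
    (hypos : ∀ k, 0 < engelT^[k] y) (n : ℕ) {a : ℕ → ℝ} (ha : ∀ k, 1 ≤ a k) (ham : Monotone a)
    (hat : Tendsto a atTop atTop) :
    ∃ x < 1, (∀ k, 0 < engelT^[k] x) ∧
      (∀ k < n, engelDigit (k + 1) x = engelDigit (k + 1) y) ∧
      engelLambda x = convergenceExponent a := by
  set c := fun k => engelDigit (k + 1) y
  have hc := engelDigit_succ_mono hypos
  set d : ℕ → ℕ := fun k => if k < n then c k else c n + ⌈a (k - n)⌉₊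
  have hdm : Monotone d := monotone_nat_of_le_succ fun k => by
    simp only [d]
    split_ifs
    · exact hc k.le_succ
    · exact (hc (by omega : k ≤ n)).trans (Nat.le_add_right _ _)
    · omega
    · exact Nat.add_le_add_left (Nat.ceil_mono (ham (by omega))) _
  have hd2 : 2 ≤ d 0 := by
    simp only [d]
    split_ifs
    · exact two_le_engelDigit_succ hypos hy 0
    · exact (two_le_engelDigit_succ hypos hy n).trans (Nat.le_add_right _ _)
  have htail : ∀ k, d (k + n) = c n + ⌈a k⌉₊ := fun k => by simp [d]
  have hdt : Tendsto d atTop atTop := tendsto_atTop_atTop_of_monotone hdm fun b => by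
    obtain ⟨k, hk⟩ := (hat.eventually_ge_atTop b).exists
    refine ⟨k + n, ?_⟩
    rw [htail]
    exact (Nat.cast_le.1 (hk.trans (Nat.le_ceil _))).trans (Nat.le_add_left _ _)
  obtain ⟨x, hx1, hxpos, hdig⟩ := exists_engelDigit_eq hdm hd2 hdt
  refine ⟨x, hx1, hxpos, fun k hk => (hdig k).trans (if_pos hk), ?_⟩
  simp_rw [engelLambda_eq_convergenceExponent, hdig]
  rw [← convergenceExponent_comp_add (fun k => (d k : ℝ)) n,
    ← convergenceExponent_natCast_add_natCeil (c n) ha]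
  simp only [htail]

theorem Irrational.mem_closure_engelLambda_eq {y : ℝ} (hirr : Irrational y) (hy : y ∈ Ioo 0 1)
    (α : ℝ≥0∞) : y ∈ closure {x : ℝ | x ∈ Ioo 0 1 ∧ engelLambda x = α} := by
  obtain ⟨a, ha, ham, hat, rfl⟩ := exists_tail_convergenceExponent_eq α
  have hypos := engelT_iterate_pos_of_irrational hirr hy.1
  refine Metric.mem_closure_iff.2 fun ε hε => ?_
  obtain ⟨n, hn⟩ := exists_pow_lt_of_lt_one hε one_half_lt_one
  obtain ⟨x, hx1, hxpos, hdig, hx⟩ :=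
    exists_engelDigit_prefix_engelLambda_eq hy.2 hypos n ha ham hat
  refine ⟨x, ⟨⟨hxpos 0, hx1⟩, hx⟩, ?_⟩
  rw [Real.dist_eq, abs_sub_comm]
  exact (abs_sub_lt_of_engelDigit_eq hx1 hy.2 hxpos hypos hdig).trans hn

/-- For every `α ∈ [0,∞]`, the level set `{x ∈ (0,1) : λ(x) = α}` is dense
in `(0,1)`. -/
theorem engelLambda_level_set_dense (α : ℝ≥0∞) :
    ∀ y ∈ Set.Ioo (0 : ℝ) 1,
      y ∈ closure {x : ℝ | x ∈ Set.Ioo (0 : ℝ) 1 ∧ engelLambda x = α} := by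
  intro y hy
  refine closure_minimal (fun z hz => ?_) isClosed_closure
    (dense_irrational.open_subset_closure_inter isOpen_Ioo hy)
  exact hz.2.mem_closure_engelLambda_eq hz.1 α
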